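/- Let P and Q be real numbers with P > 0, Q > 0 and P ≠ Q, let n be a natural number, let m, u be real numbers such that [m+u−i]_{P,Q} ≠ 0 for 0 ≤ i ≤ n−1, and let κ be a natural number with κ ≤ n−1 such that [u−n+κ+1]_{P,Q} ≠ 0. Then the (P,Q)-Pólya distribution weights P_κ = P^{κ(u−n+κ)} · Q^{(n−κ)(m−κ)} · C_{P,Q}(n,κ) · [m]_{κ,P,Q} · [u]_{n−κ,P,Q}/[m+u]_{n,P,Q} satisfy the recursion P_{κ+1} = P^{u−n+2κ+1} · Q^{−(n+m−2κ−1)} · ([n−κ]_{P,Q} · [m−κ]_{P,Q}) / ([u−n+κ+1]_{P,Q} · [κ+1]_{P,Q}) · P_κ, with initial value P₀ = Q^{n·m} · [u]_{n,P,Q}/[m+u]_{n,P,Q}. -/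
import Mathlib


/-- The (P,Q)-deformed number `[x]_{P,Q} = (P^x - Q^x)/(P - Q)` (real powers). -/
noncomputable def pqNum (P Q x : ℝ) : ℝ := (P ^ x - Q ^ x) / (P - Q)

/-- The (P,Q)-factorial `[n]_{P,Q}! = ∏_{i=1}^n [i]_{P,Q}`. -/
noncomputable def pqFac (P Q : ℝ) (n : ℕ) : ℝ := ∏ i ∈ Finset.range n, pqNum P Q ((i : ℝ) + 1)

/-- The j-th order (P,Q)-factorial `[x]_{j,P,Q} = ∏_{v=0}^{j-1} [x-v]_{P,Q}`. -/
noncomputable def pqFacOrd (P Q x : ℝ) (j : ℕ) : ℝ := ∏ v ∈ Finset.range j, pqNum P Q (x - (v : ℝ))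

/-- The (P,Q)-binomial coefficient `C_{P,Q}(n,κ)`. -/
noncomputable def pqBinom (P Q : ℝ) (n k : ℕ) : ℝ := pqFac P Q n / (pqFac P Q k * pqFac P Q (n - k))

/-- The (P,Q)-Pólya distribution weight
`P_κ = P^{κ(u-n+κ)} Q^{(n-κ)(m-κ)} C_{P,Q}(n,κ) [m]_{κ,P,Q} [u]_{n-κ,P,Q}/[m+u]_{n,P,Q}`. -/
noncomputable def polyaWeight (P Q m u : ℝ) (n κ : ℕ) : ℝ :=
  P ^ ((κ : ℝ) * (u - (n : ℝ) + (κ : ℝ))) * Q ^ (((n : ℝ) - (κ : ℝ)) * (m - (κ : ℝ)))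
    * pqBinom P Q n κ * pqFacOrd P Q m κ * pqFacOrd P Q u (n - κ) / pqFacOrd P Q (m + u) n

lemma pqNum_ne_zero {P Q : ℝ} (hP : 0 < P) (hQ : 0 < Q) (hPQ : P ≠ Q)
    {x : ℝ} (hx : x ≠ 0) : pqNum P Q x ≠ 0 := by
  unfold pqNum
  apply div_ne_zero _ (sub_ne_zero.mpr hPQ)
  intro h
  apply hPQ
  have h' : P ^ x = Q ^ x := sub_eq_zero.mp h
  have h2 := congrArg Real.log h'
  rw [Real.log_rpow hP, Real.log_rpow hQ] at h2
  have hlog : Real.log P = Real.log Q := mul_left_cancel₀ hx h2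
  calc P = Real.exp (Real.log P) := (Real.exp_log hP).symm
    _ = Real.exp (Real.log Q) := by rw [hlog]
    _ = Q := Real.exp_log hQ

lemma pqFac_ne_zero {P Q : ℝ} (hP : 0 < P) (hQ : 0 < Q) (hPQ : P ≠ Q) (n : ℕ) :
    pqFac P Q n ≠ 0 := by
  unfold pqFac
  exact Finset.prod_ne_zero_iff.mpr fun i _ => pqNum_ne_zero hP hQ hPQ (by positivity)

lemma pqFac_succ (P Q : ℝ) (n : ℕ) :
    pqFac P Q (n + 1) = pqFac P Q n * pqNum P Q ((n : ℝ) + 1) := by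
  unfold pqFac; rw [Finset.prod_range_succ]

lemma pqFacOrd_succ (P Q x : ℝ) (n : ℕ) :
    pqFacOrd P Q x (n + 1) = pqFacOrd P Q x n * pqNum P Q (x - (n : ℝ)) := by
  unfold pqFacOrd; rw [Finset.prod_range_succ]

/-- The recursion relation for the (P,Q)-Pólya distribution weights, with initial value. -/
theorem pq_polya_recursion (P Q : ℝ) (hP : 0 < P) (hQ : 0 < Q) (hPQ : P ≠ Q)
    (n : ℕ) (m u : ℝ)
    (hmu : ∀ i : ℕ, i < n → pqNum P Q (m + u - (i : ℝ)) ≠ 0)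
    (κ : ℕ) (hκ : κ + 1 ≤ n) (hu : pqNum P Q (u - (n : ℝ) + (κ : ℝ) + 1) ≠ 0) :
    polyaWeight P Q m u n (κ + 1) =
      P ^ (u - (n : ℝ) + 2 * (κ : ℝ) + 1) * Q ^ (-((n : ℝ) + m - 2 * (κ : ℝ) - 1))
        * (pqNum P Q ((n : ℝ) - (κ : ℝ)) * pqNum P Q (m - (κ : ℝ)))
        / (pqNum P Q (u - (n : ℝ) + (κ : ℝ) + 1) * pqNum P Q ((κ : ℝ) + 1))
        * polyaWeight P Q m u n κ ∧
    polyaWeight P Q m u n 0 =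
      Q ^ ((n : ℝ) * m) * pqFacOrd P Q u n / pqFacOrd P Q (m + u) n := by
  have hden : pqFacOrd P Q (m + u) n ≠ 0 := by
    unfold pqFacOrd
    exact Finset.prod_ne_zero_iff.mpr fun i hi => hmu i (Finset.mem_range.mp hi)
  constructor
  · obtain ⟨j, rfl⟩ : ∃ j, n = κ + 1 + j := ⟨n - (κ + 1), by omega⟩
    have hfacκ : pqFac P Q κ ≠ 0 := pqFac_ne_zero hP hQ hPQ κ
    have hfacj : pqFac P Q j ≠ 0 := pqFac_ne_zero hP hQ hPQ j
    have h1 : pqNum P Q ((κ : ℝ) + 1) ≠ 0 := pqNum_ne_zero hP hQ hPQ (by positivity)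
    have hu' : pqNum P Q (u - (j : ℝ)) ≠ 0 := by
      have : u - ((κ + 1 + j : ℕ) : ℝ) + (κ : ℝ) + 1 = u - (j : ℝ) := by push_cast; ring
      rwa [this] at hu
    unfold polyaWeight pqBinom
    rw [show κ + 1 + j - (κ + 1) = j by omega, show κ + 1 + j - κ = j + 1 by omega]
    rw [pqFac_succ P Q κ, pqFac_succ P Q j, pqFacOrd_succ, pqFacOrd_succ]
    have hPsplit : P ^ (((κ : ℝ) + 1) * (u - ((κ + 1 + j : ℕ) : ℝ) + ((κ : ℝ) + 1)))
        = P ^ (u - ((κ + 1 + j : ℕ) : ℝ) + 2 * (κ : ℝ) + 1)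
          * P ^ ((κ : ℝ) * (u - ((κ + 1 + j : ℕ) : ℝ) + (κ : ℝ))) := by
      rw [← Real.rpow_add hP]; congr 1; push_cast; ring
    have hQsplit : Q ^ ((((κ + 1 + j : ℕ) : ℝ) - ((κ : ℝ) + 1)) * (m - ((κ : ℝ) + 1)))
        = Q ^ (-(((κ + 1 + j : ℕ) : ℝ) + m - 2 * (κ : ℝ) - 1))
          * Q ^ ((((κ + 1 + j : ℕ) : ℝ) - (κ : ℝ)) * (m - (κ : ℝ))) := by
      rw [← Real.rpow_add hQ]; congr 1; push_cast; ring
    push_cast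
    push_cast at hPsplit hQsplit hu'
    rw [hPsplit, hQsplit]
    have huj : pqNum P Q (u - (((κ:ℝ) + 1 + (j:ℝ)) - ((κ:ℝ) + 1))) = pqNum P Q (u - (j:ℝ)) := by
      norm_num
    have hnum_nk : pqNum P Q ((κ:ℝ) + 1 + (j:ℝ) - (κ:ℝ)) = pqNum P Q ((j:ℝ) + 1) := by
      ring_nf
    push_cast at hu
    have hnj : pqNum P Q ((j : ℝ) + 1) ≠ 0 := pqNum_ne_zero hP hQ hPQ (by positivity)
    field_simp [hfacκ, hfacj, h1, hu', hu, hnj, hden]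
    ring
  · have hfac := pqFac_ne_zero hP hQ hPQ n
    unfold pqFac at hfac
    unfold polyaWeight pqBinom pqFac pqFacOrd
    simp [Nat.sub_zero, pqFacOrd]
    rw [div_self hfac]
    ring
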